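/- If σ_h, σ_v generate a transitive subgroup of Σ_k, then the retiled permutations σ'_h, σ'_v (defined as in the retiling construction with coprime q > p ≥ 1) generate a transitive subgroup of Σ_{kq}. -/

import Mathlib

/-!
Powers of `σh'` walk along a row of parallelograms: `σh' ^ j` carries `(i, 0)` to `(i, j)`, and
`σh' ^ q` returns to column `0` in the row `σh i`. Likewise `(σh' ^ p)⁻¹ * σv'` maps `(i, 0)` to
`(σv i, 0)`. So every element of `⟨σh, σv⟩` is realised by an element of `⟨σh', σv'⟩` on
column `0`, and transitivity on the rows together with the walk along rows gives transitivity
on all of `Fin k × Fin q`.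
-/

open Equiv

section Slice

variable {α β : Type*}

def Subgroup.sliceSubgroup (C : Subgroup (Perm (α × β))) (b : β) : Subgroup (Perm α) where
  carrier := {g | ∃ g' ∈ C, ∀ a, g' (a, b) = (g a, b)}
  one_mem' := ⟨1, C.one_mem, fun _ => rfl⟩
  mul_mem' := by
    rintro g h ⟨g', hg'C, hg'⟩ ⟨h', hh'C, hh'⟩
    exact ⟨g' * h', C.mul_mem hg'C hh'C, fun a => by simp only [Perm.mul_apply, hh', hg']⟩
  inv_mem' := by
    rintro g ⟨g', hg'C, hg'⟩
    refine ⟨g'⁻¹, C.inv_mem hg'C, fun a => ?_⟩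
    rw [Perm.inv_eq_iff_eq, hg', ← Perm.mul_apply, mul_inv_cancel, Perm.one_apply]

theorem Subgroup.exists_mem_apply_eq_of_sliceSubgroup {C : Subgroup (Perm (α × β))} (b : β)
    (hreach : ∀ x : α × β, ∃ g ∈ C, g (x.1, b) = x)
    (htrans : ∀ a a' : α, ∃ g ∈ C.sliceSubgroup b, g a = a') (x y : α × β) :
    ∃ g ∈ C, g x = y := by
  obtain ⟨gx, hgxC, hgx⟩ := hreach x
  obtain ⟨gy, hgyC, hgy⟩ := hreach y
  obtain ⟨g, ⟨g', hg'C, hg'⟩, hg⟩ := htrans x.1 y.1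
  refine ⟨gy * g' * gx⁻¹, C.mul_mem (C.mul_mem hgyC hg'C) (C.inv_mem hgxC), ?_⟩
  rw [Perm.mul_apply, Perm.mul_apply, Perm.inv_eq_iff_eq.mpr hgx.symm, hg', hg, hgy]

end Slice

section RowShift

variable {α : Type*} {q : ℕ} {τ : Perm (α × Fin q)}

theorem Equiv.Perm.pow_apply_of_shift
    (hshift : ∀ a (j : Fin q) (h : (j : ℕ) + 1 < q), τ (a, j) = (a, ⟨j + 1, h⟩))
    (n : ℕ) (a : α) (j : Fin q) (h : (j : ℕ) + n < q) :
    (τ ^ n) (a, j) = (a, ⟨j + n, h⟩) := by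
  induction n generalizing j with
  | zero => rfl
  | succ n ih =>
    rw [pow_succ, Perm.mul_apply, hshift a j (by omega), ih _ (by simp only; omega)]
    simp only [Prod.mk.injEq, Fin.mk.injEq, true_and]
    omega

theorem Equiv.Perm.pow_apply_zero_of_shift
    (hshift : ∀ a (j : Fin q) (h : (j : ℕ) + 1 < q), τ (a, j) = (a, ⟨j + 1, h⟩))
    (a : α) (j : Fin q) : (τ ^ (j : ℕ)) (a, ⟨0, j.pos⟩) = (a, j) := by
  rw [pow_apply_of_shift hshift _ _ _ (by simp)]
  simp

theorem Equiv.Perm.pow_card_apply_zero_of_shift {σ : Perm α}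
    (hshift : ∀ a (j : Fin q) (h : (j : ℕ) + 1 < q), τ (a, j) = (a, ⟨j + 1, h⟩))
    (hwrap : ∀ a (j : Fin q), (j : ℕ) + 1 = q → τ (a, j) = (σ a, ⟨0, j.pos⟩))
    (hq : 0 < q) (a : α) : (τ ^ q) (a, ⟨0, hq⟩) = (σ a, ⟨0, hq⟩) := by
  obtain ⟨m, rfl⟩ : ∃ m, q = m + 1 := ⟨q - 1, by omega⟩
  rw [pow_succ', Perm.mul_apply, pow_apply_of_shift hshift m a _ (by simp), hwrap a _ (by simp)]

end RowShift

theorem retiling_preserves_transitivity_general (k p q : ℕ) (hpq : p < q)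
    (σh σv : Equiv.Perm (Fin k))
    (σh' σv' : Equiv.Perm (Fin k × Fin q))
    (hσh' : ∀ (i : Fin k) (j : Fin q),
      if (j : ℕ) + 1 < q then
        (σh' (i, j)).1 = i ∧ ((σh' (i, j)).2 : ℕ) = (j : ℕ) + 1
      else
        (σh' (i, j)).1 = σh i ∧ ((σh' (i, j)).2 : ℕ) = 0)
    (hσv' : ∀ (i : Fin k) (j : Fin q),
      if (j : ℕ) + p < q then
        (σv' (i, j)).1 = σv i ∧ ((σv' (i, j)).2 : ℕ) = (j : ℕ) + p
      else
        (σv' (i, j)).1 = σv (σh i) ∧ ((σv' (i, j)).2 : ℕ) = (j : ℕ) + p - q)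
    (htrans : ∀ i j : Fin k,
      ∃ g ∈ Subgroup.closure ({σh, σv} : Set (Equiv.Perm (Fin k))), g i = j) :
    ∀ x y : Fin k × Fin q,
      ∃ g ∈ Subgroup.closure ({σh', σv'} : Set (Equiv.Perm (Fin k × Fin q))),
        g x = y := by
  have hq : 0 < q := by omega
  set C := Subgroup.closure ({σh', σv'} : Set (Equiv.Perm (Fin k × Fin q)))
  have hh : σh' ∈ C := Subgroup.subset_closure (by simp)
  have hv : σv' ∈ C := Subgroup.subset_closure (by simp)
  have hshift : ∀ i (j : Fin q) (h : (j : ℕ) + 1 < q), σh' (i, j) = (i, ⟨j + 1, h⟩) :=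
    fun i j h => by
      have hij := hσh' i j
      rw [if_pos h] at hij
      exact Prod.ext hij.1 (Fin.ext hij.2)
  have hwrap : ∀ i (j : Fin q), (j : ℕ) + 1 = q → σh' (i, j) = (σh i, ⟨0, j.pos⟩) :=
    fun i j h => by
      have hij := hσh' i j
      rw [if_neg (by omega)] at hij
      exact Prod.ext hij.1 (Fin.ext hij.2)
  have hvert : ∀ i, σv' (i, ⟨0, hq⟩) = (σv i, ⟨p, hpq⟩) := fun i => by
    have hi := hσv' i ⟨0, hq⟩
    rw [if_pos (by simpa using hpq)] at hi
    exact Prod.ext hi.1 (Fin.ext (by simpa using hi.2))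
  have hle : Subgroup.closure {σh, σv} ≤ C.sliceSubgroup ⟨0, hq⟩ := by
    rw [Subgroup.closure_le, Set.insert_subset_iff, Set.singleton_subset_iff]
    refine ⟨⟨σh' ^ q, C.pow_mem hh q, Perm.pow_card_apply_zero_of_shift hshift hwrap hq⟩,
      ⟨(σh' ^ p)⁻¹ * σv', C.mul_mem (C.inv_mem (C.pow_mem hh p)) hv, fun i => ?_⟩⟩
    rw [Perm.mul_apply, hvert, Perm.inv_eq_iff_eq,
      Perm.pow_apply_zero_of_shift hshift (σv i) ⟨p, hpq⟩]
  refine Subgroup.exists_mem_apply_eq_of_sliceSubgroup ⟨0, hq⟩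
    (fun x => ⟨σh' ^ (x.2 : ℕ), C.pow_mem hh _, Perm.pow_apply_zero_of_shift hshift _ _⟩)
    (fun i i' => ?_)
  obtain ⟨g, hg, hgi⟩ := htrans i i'
  exact ⟨g, hle hg, hgi⟩

/-- if `σh, σv` generate a transitive subgroup of the symmetric
group on the `k` squares, then the retiled permutations `σh', σv'` (for coprime
`q > p ≥ 1`, defined 0-based on pairs as in the retiling construction) generate
a transitive subgroup of the symmetric group on the `kq` parallelograms. -/
theorem retiling_preserves_transitivity (k p q : ℕ) (hp : 1 ≤ p) (hpq : p < q)
    (hcop : Nat.Coprime p q) (σh σv : Equiv.Perm (Fin k))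
    (σh' σv' : Equiv.Perm (Fin k × Fin q))
    (hσh' : ∀ (i : Fin k) (j : Fin q),
      if (j : ℕ) + 1 < q then
        (σh' (i, j)).1 = i ∧ ((σh' (i, j)).2 : ℕ) = (j : ℕ) + 1
      else
        (σh' (i, j)).1 = σh i ∧ ((σh' (i, j)).2 : ℕ) = 0)
    (hσv' : ∀ (i : Fin k) (j : Fin q),
      if (j : ℕ) + p < q then
        (σv' (i, j)).1 = σv i ∧ ((σv' (i, j)).2 : ℕ) = (j : ℕ) + p
      else
        (σv' (i, j)).1 = σv (σh i) ∧ ((σv' (i, j)).2 : ℕ) = (j : ℕ) + p - q)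
    (htrans : ∀ i j : Fin k,
      ∃ g ∈ Subgroup.closure ({σh, σv} : Set (Equiv.Perm (Fin k))), g i = j) :
    ∀ x y : Fin k × Fin q,
      ∃ g ∈ Subgroup.closure ({σh', σv'} : Set (Equiv.Perm (Fin k × Fin q))),
        g x = y :=
  retiling_preserves_transitivity_general k p q hpq σh σv σh' σv' hσh' hσv' htrans
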